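/- arXiv:1804.07572 — 5 statements merged into one kernel-verified Lean document; each statement's English description precedes it below -/
import Mathlib

section
/- Let X = (int B^{d+1}) \ (1−ε)B^{d+1} be an open spherical shell in ℝ^{d+1} with d ≥ 2 and 0 < ε < 1, and let Z₁, …, Z_k be pairwise disjoint closed subsets of X such that X \ Z_i is connected for every i. Then X \ (Z₁ ∪ … ∪ Z_k) is connected. -/
/-!
A nonvanishing continuous function `f` on the shell has a continuous logarithm. Radially the shell
is `E \ {0}`, the union of the complements of the closed rays through `v` and `-v`. These are open
and star-shaped, hence simply connected, so `f` lifts through the covering map `exp` on each; they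
meet in the complement of a line, which is connected as `dim E ≥ 3`, so the two lifts can be
adjusted by a constant in `2πiℤ` and glued.

On a normal connected space `Y` where such logarithms exist, let `A`, `B` be disjoint closed sets
with connected complements, and suppose `(A ∪ B)ᶜ = P ⊔ Q` with `P`, `Q` open and nonempty. With a
Urysohn function `h` (`0` on `A`, `1` on `B`), the map equal to `exp (-iπh)` on `Q` and `exp (iπh)`
elsewhere is continuous, because `h ∈ {0, 1}` on the frontier of `Q`. It has one continuous
argument on `Bᶜ` and another on `Aᶜ`, whose difference is `2π` on `P` and `0` on `Q`. Comparing
both with a global logarithm on the connected sets `Bᶜ` and `Aᶜ` shows that this difference is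
constant on `P ∪ Q`, a contradiction. Induction on the number of sets gives the theorem.
-/

open Set Metric Complex Function
open scoped Real Set.Notation

section Logs

variable {α β : Type*} [TopologicalSpace α] [TopologicalSpace β]

def HasContinuousLogsOn (s : Set α) : Prop :=
  ∀ f : α → ℂ, ContinuousOn f s → (∀ x ∈ s, f x ≠ 0) →
    ∃ g : α → ℂ, ContinuousOn g s ∧ ∀ x ∈ s, exp (g x) = f x

theorem IsPreconnected.sub_eq_sub_of_exp_eq {s : Set α} (hs : IsPreconnected s)
    {g₁ g₂ : α → ℂ} (hg₁ : ContinuousOn g₁ s) (hg₂ : ContinuousOn g₂ s)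
    (h : ∀ x ∈ s, exp (g₁ x) = exp (g₂ x)) {x y : α} (hx : x ∈ s) (hy : y ∈ s) :
    g₁ x - g₂ x = g₁ y - g₂ y :=
  isCoveringMap_exp.constOn_of_comp hs (hg₁.sub hg₂)
    (fun a ha b hb => Subtype.ext (by simp [exp_sub, h a ha, h b hb])) hx hy

theorem hasContinuousLogsOn_of_simplyConnectedSpace (s : Set α) [SimplyConnectedSpace s]
    [LocallyPathConnectedSpace s] : HasContinuousLogsOn s := by
  classical
  intro f hf hf0
  obtain ⟨a₀⟩ : Nonempty s := inferInstance
  obtain ⟨F, ⟨-, hF⟩, -⟩ := isCoveringMapOn_exp.existsUnique_continuousMap_lifts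
    ⟨s.domRestrict f, hf.domRestrict⟩ (exp_log (hf0 _ a₀.2)) fun a => hf0 _ a.2
  refine ⟨fun x => if hx : x ∈ s then F ⟨x, hx⟩ else 0, ?_,
    fun x hx => by simpa [hx, Set.domRestrict] using congrFun hF ⟨x, hx⟩⟩
  rw [continuousOn_iff_continuous_domRestrict]
  convert F.continuous with x
  simp

theorem HasContinuousLogsOn.union {U V : Set α} (hU : HasContinuousLogsOn U)
    (hV : HasContinuousLogsOn V) (hUo : IsOpen U) (hVo : IsOpen V) (hUV : IsConnected (U ∩ V)) :
    HasContinuousLogsOn (U ∪ V) := by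
  classical
  intro f hf hf0
  obtain ⟨g₁, hg₁, hg₁f⟩ := hU f (hf.mono subset_union_left) fun x hx => hf0 x (.inl hx)
  obtain ⟨g₂, hg₂, hg₂f⟩ := hV f (hf.mono subset_union_right) fun x hx => hf0 x (.inr hx)
  obtain ⟨z, hzU, hzV⟩ := hUV.nonempty
  set c := g₁ z - g₂ z
  have hc : exp c = 1 := by rw [exp_sub, hg₁f z hzU, hg₂f z hzV, div_self (hf0 z (.inl hzU))]
  have hagree : ∀ x ∈ U ∩ V, g₁ x = g₂ x + c := fun x hx => by
    have := hUV.isPreconnected.sub_eq_sub_of_exp_eq (hg₁.mono inter_subset_left)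
      (hg₂.mono inter_subset_right) (fun y hy => by rw [hg₁f y hy.1, hg₂f y hy.2]) hx ⟨hzU, hzV⟩
    linear_combination this
  have hgV : EqOn (U.piecewise g₁ fun x => g₂ x + c) (fun x => g₂ x + c) V := fun x hx => by
    by_cases hxU : x ∈ U
    · simp [hxU, hagree x ⟨hxU, hx⟩]
    · simp [hxU]
  refine ⟨U.piecewise g₁ fun x => g₂ x + c, ?_, ?_⟩
  · exact ContinuousOn.union_of_isOpen (hg₁.congr fun x hx => piecewise_eq_of_mem _ _ _ hx)
      ((hg₂.add continuousOn_const).congr hgV) hUo hVo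
  · rintro x (hx | hx)
    · simp [hx, hg₁f x hx]
    · rw [hgV hx, exp_add, hc, mul_one, hg₂f x hx]

theorem HasContinuousLogsOn.of_leftInvOn {s : Set α} {t : Set β} (hs : HasContinuousLogsOn s)
    {φ : α → β} {ψ : β → α} (hφ : ContinuousOn φ s) (hφs : MapsTo φ s t)
    (hψ : ContinuousOn ψ t) (hψt : MapsTo ψ t s) (hinv : LeftInvOn φ ψ t) :
    HasContinuousLogsOn t := by
  intro f hf hf0
  obtain ⟨g, hg, hgf⟩ := hs (f ∘ φ) (hf.comp hφ hφs) fun x hx => hf0 _ (hφs hx)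
  exact ⟨g ∘ ψ, hg.comp hψ hψt, fun y hy => by simp [hgf _ (hψt hy), hinv hy]⟩

theorem HasContinuousLogsOn.to_subtype {s : Set α} (hs : HasContinuousLogsOn s) :
    HasContinuousLogsOn (univ : Set s) := by
  classical
  intro f hf hf0
  let F : α → ℂ := fun x => if hx : x ∈ s then f ⟨x, hx⟩ else 1
  have hF : ContinuousOn F s := by
    rw [continuousOn_iff_continuous_domRestrict]
    convert continuousOn_univ.mp hf with x
    simp [F]
  obtain ⟨g, hg, hgF⟩ := hs F hF fun x hx => by simpa [F, hx] using hf0 _ (mem_univ _)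
  exact ⟨g ∘ Subtype.val, (hg.comp_continuous continuous_subtype_val Subtype.prop).continuousOn,
    fun x _ => by simpa [F] using hgF x x.2⟩

end Logs

section Shell

variable {E : Type*} [NormedAddCommGroup E] [NormedSpace ℝ E]

theorem StarConvex.hasContinuousLogsOn {x : E} {s : Set E} (hs : StarConvex ℝ x s)
    (hne : s.Nonempty) (ho : IsOpen s) : HasContinuousLogsOn s :=
  haveI := hs.contractibleSpace hne
  haveI := ho.locallyPathConnectedSpace
  hasContinuousLogsOn_of_simplyConnectedSpace s

def closedRay (v : E) : Set E := (fun t : ℝ => t • v) '' Ici 0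

theorem isClosed_closedRay (v : E) : IsClosed (closedRay v) :=
  isClosedMap_smul_left v _ isClosed_Ici

theorem neg_notMem_closedRay {v : E} (hv : v ≠ 0) : -v ∉ closedRay v := by
  rintro ⟨t, ht, h⟩
  have : (t + 1) • v = 0 := by linear_combination (norm := module) h
  exact hv ((smul_eq_zero.mp this).resolve_left (add_pos_of_nonneg_of_pos ht one_pos).ne')

theorem starConvex_compl_closedRay {v : E} (hv : v ≠ 0) : StarConvex ℝ (-v) (closedRay v)ᶜ := by
  rintro y hy a b ha hb hab ⟨t, ht, h⟩
  rcases hb.eq_or_lt with rfl | hb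
  · rw [add_zero] at hab
    subst hab
    exact neg_notMem_closedRay hv ⟨t, ht, by simpa using h⟩
  · refine hy ⟨(t + a) / b, div_nonneg (add_nonneg ht ha) hb.le, ?_⟩
    have : (t + a) • v = b • y := by linear_combination (norm := module) h
    show ((t + a) / b) • v = y
    rw [div_eq_inv_mul, mul_smul, this, smul_smul, inv_mul_cancel₀ hb.ne', one_smul]

theorem closedRay_inter_closedRay_neg {v : E} (hv : v ≠ 0) :
    closedRay v ∩ closedRay (-v) = {0} := by
  refine subset_antisymm ?_ <| singleton_subset_iff.mpr
    ⟨⟨0, self_mem_Ici, zero_smul _ _⟩, 0, self_mem_Ici, zero_smul _ _⟩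
  rintro _ ⟨⟨s, hs, rfl⟩, t, ht, h⟩
  have : (s + t) • v = 0 := by linear_combination (norm := module) -h
  have hst : s + t = 0 := (smul_eq_zero.mp this).resolve_right hv
  rw [mem_Ici] at hs ht
  simp [show s = 0 by linarith]

theorem closedRay_union_closedRay_neg (v : E) :
    closedRay v ∪ closedRay (-v) = (ℝ ∙ v : Set E) := by
  ext x
  simp only [closedRay, mem_union, mem_image, mem_Ici, SetLike.mem_coe,
    Submodule.mem_span_singleton]
  constructor
  · rintro (⟨t, -, rfl⟩ | ⟨t, -, rfl⟩)
    exacts [⟨t, rfl⟩, ⟨-t, by simp⟩]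
  · rintro ⟨t, rfl⟩
    rcases le_total 0 t with ht | ht
    exacts [.inl ⟨t, ht, rfl⟩, .inr ⟨-t, by linarith, by simp⟩]

theorem one_lt_rank_quotient_span_singleton (hE : 2 < Module.rank ℝ E) (v : E) :
    1 < Module.rank ℝ (E ⧸ ℝ ∙ v) := by
  have hle : Module.rank ℝ (ℝ ∙ v) ≤ 1 := by simpa using rank_span_le (R := ℝ) ({v} : Set E)
  by_contra! h
  have := add_le_add h hle
  rw [rank_quotient_add_rank_of_divisionRing, one_add_one_eq_two] at this
  exact this.not_gt hE

theorem hasContinuousLogsOn_compl_zero (hE : 2 < Module.rank ℝ E) :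
    HasContinuousLogsOn ({0}ᶜ : Set E) := by
  have : Nontrivial E := rank_pos_iff_nontrivial.mp (zero_lt_two.trans hE)
  obtain ⟨v, hv⟩ := exists_ne (0 : E)
  have hlog {w : E} (hw : w ≠ 0) : HasContinuousLogsOn (closedRay w)ᶜ :=
    (starConvex_compl_closedRay hw).hasContinuousLogsOn ⟨-w, neg_notMem_closedRay hw⟩
      (isClosed_closedRay w).isOpen_compl
  have hinter : (closedRay v)ᶜ ∩ (closedRay (-v))ᶜ = ((ℝ ∙ v : Submodule ℝ E) : Set E)ᶜ := by
    rw [← compl_union, closedRay_union_closedRay_neg]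
  rw [← closedRay_inter_closedRay_neg hv, compl_inter]
  exact (hlog hv).union (hlog (neg_ne_zero.mpr hv)) (isClosed_closedRay _).isOpen_compl
    (isClosed_closedRay _).isOpen_compl
    (hinter ▸ (isPathConnected_compl_of_one_lt_codim
      (one_lt_rank_quotient_span_singleton hE v)).isConnected)

theorem norm_div_norm_smul {c : ℝ} (hc : 0 ≤ c) {x : E} (hx : x ≠ 0) : ‖(c / ‖x‖) • x‖ = c := by
  rw [norm_smul, Real.norm_of_nonneg (div_nonneg hc (norm_nonneg x)),
    div_mul_cancel₀ _ (norm_ne_zero_iff.mpr hx)]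

theorem exists_leftInvOn_compl_zero_shell {l r : ℝ} (hl : 0 ≤ l) (hlr : l < r) :
    ∃ φ ψ : E → E, ContinuousOn φ {0}ᶜ ∧ MapsTo φ {0}ᶜ (ball 0 r \ closedBall 0 l) ∧
      ContinuousOn ψ (ball 0 r \ closedBall 0 l) ∧ MapsTo ψ (ball 0 r \ closedBall 0 l) {0}ᶜ ∧
      LeftInvOn φ ψ (ball 0 r \ closedBall 0 l) := by
  have hmem {x : E} : x ∈ ball 0 r \ closedBall 0 l ↔ l < ‖x‖ ∧ ‖x‖ < r := by
    simp [and_comm]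
  have hr : 0 < r := hl.trans_lt hlr
  -- `ρ` maps `(0, ∞)` increasingly onto `(l, r)` and `σ` is its inverse
  let ρ : ℝ → ℝ := fun t => (l + r * t) / (1 + t)
  let σ : ℝ → ℝ := fun s => (s - l) / (r - s)
  refine ⟨fun x => (ρ ‖x‖ / ‖x‖) • x, fun y => (σ ‖y‖ / ‖y‖) • y, ?_, ?_, ?_, ?_, ?_⟩
  · refine ContinuousOn.smul ?_ continuousOn_id
    refine ContinuousOn.div ?_ continuous_norm.continuousOn fun x hx => norm_ne_zero_iff.mpr hx
    exact ContinuousOn.div (by fun_prop) (by fun_prop) fun x _ =>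
      (add_pos_of_pos_of_nonneg one_pos (norm_nonneg x)).ne'
  · intro x hx
    have hx' : 0 < ‖x‖ := norm_pos_iff.mpr hx
    rw [hmem, norm_div_norm_smul (div_pos (by positivity) (by positivity)).le hx]
    constructor
    · rw [lt_div_iff₀ (by positivity)]; nlinarith
    · rw [div_lt_iff₀ (by positivity)]; nlinarith
  · refine ContinuousOn.smul ?_ continuousOn_id
    refine ContinuousOn.div ?_ continuous_norm.continuousOn fun y hy => ?_
    · exact ContinuousOn.div (by fun_prop) (by fun_prop) fun y hy =>
        (sub_pos.mpr (hmem.mp hy).2).ne'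
    · exact (hl.trans_lt (hmem.mp hy).1).ne'
  · intro y hy
    obtain ⟨h1, h2⟩ := hmem.mp hy
    have : 0 < σ ‖y‖ / ‖y‖ := div_pos (div_pos (by linarith) (by linarith)) (by linarith)
    exact smul_ne_zero this.ne' (norm_pos_iff.mp (by linarith))
  · intro y hy
    obtain ⟨h1, h2⟩ := hmem.mp hy
    have hy0 : y ≠ 0 := norm_pos_iff.mp (by linarith)
    have hσ : 0 < σ ‖y‖ := div_pos (by linarith) (by linarith)
    have hρσ : ρ (σ ‖y‖) = ‖y‖ := by
      have : r - ‖y‖ ≠ 0 := (sub_pos.mpr h2).ne'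
      rw [div_eq_iff (add_pos one_pos hσ).ne']
      simp only [σ]
      field_simp
      ring
    simp only
    rw [norm_div_norm_smul hσ.le hy0, hρσ, smul_smul, div_mul_div_cancel₀ hσ.ne',
      div_self (norm_ne_zero_iff.mpr hy0), one_smul]

theorem hasContinuousLogsOn_shell (hE : 2 < Module.rank ℝ E) {l r : ℝ} (hl : 0 ≤ l)
    (hlr : l < r) : HasContinuousLogsOn (ball (0 : E) r \ closedBall 0 l) := by
  obtain ⟨φ, ψ, hφ, hφs, hψ, hψs, hinv⟩ := exists_leftInvOn_compl_zero_shell (E := E) hl hlr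
  exact (hasContinuousLogsOn_compl_zero hE).of_leftInvOn hφ hφs hψ hψs hinv

theorem isConnected_shell (hE : 1 < Module.rank ℝ E) {l r : ℝ} (hl : 0 ≤ l) (hlr : l < r) :
    IsConnected (ball (0 : E) r \ closedBall 0 l) := by
  obtain ⟨φ, ψ, hφ, hφs, -, hψs, hinv⟩ := exists_leftInvOn_compl_zero_shell (E := E) hl hlr
  have : φ '' {0}ᶜ = ball 0 r \ closedBall 0 l :=
    hφs.image_subset.antisymm fun y hy => ⟨ψ y, hψs hy, hinv hy⟩
  exact this ▸ (isConnected_compl_singleton_of_one_lt_rank hE 0).image φ hφ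

end Shell

section Separation

theorem frontier_subset_compl_union {α : Type*} [TopologicalSpace α] {P Q : Set α} (hP : IsOpen P)
    (hQ : IsOpen Q) (hPQ : Disjoint P Q) : frontier Q ⊆ (P ∪ Q)ᶜ := by
  rintro x ⟨hxQ, hxQ'⟩ (hxP | hxQ'')
  · exact (hPQ.closure_right hP).notMem_of_mem_left hxP hxQ
  · exact hxQ' (hQ.interior_eq.symm ▸ hxQ'')

variable {Y : Type*} [TopologicalSpace Y] [NormalSpace Y]

theorem eq_empty_or_eq_empty_of_hasContinuousLogsOn (hY : HasContinuousLogsOn (univ : Set Y))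
    {A B P Q : Set Y} (hA : IsClosed A) (hB : IsClosed B) (hAB : Disjoint A B)
    (hAc : IsPreconnected Aᶜ) (hBc : IsPreconnected Bᶜ) (hP : IsOpen P) (hQ : IsOpen Q)
    (hPQ : Disjoint P Q) (hcover : P ∪ Q = (A ∪ B)ᶜ) : P = ∅ ∨ Q = ∅ := by
  classical
  by_contra! ⟨⟨p, hp⟩, ⟨q, hq⟩⟩
  have hfr : frontier Q ⊆ A ∪ B := by
    simpa only [hcover, compl_compl] using frontier_subset_compl_union hP hQ hPQ
  obtain ⟨h, hA0, hB1, -⟩ := exists_continuous_zero_one_of_isClosed hA hB hAB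
  -- two arguments, in units of `π`, of one circle-valued map
  let θ₁ : Y → ℝ := Q.piecewise (fun x => -h x) h
  let θ₂ : Y → ℝ := Q.piecewise (fun x => -h x) (fun x => h x - 2)
  let L : (Y → ℝ) → Y → ℂ := fun θ x => θ x * (π * I)
  have hL {θ : Y → ℝ} {s : Set Y} (hθ : ContinuousOn θ s) : ContinuousOn (L θ) s :=
    (continuous_ofReal.comp_continuousOn hθ).mul continuousOn_const
  have hθ₁ : ContinuousOn θ₁ Bᶜ := by
    refine ContinuousOn.piecewise (fun x hx => ?_) (by fun_prop) (by fun_prop)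
    simp [hA0 ((hfr hx.2).resolve_right hx.1)]
  have hθ₂ : ContinuousOn θ₂ Aᶜ := by
    refine ContinuousOn.piecewise (fun x hx => ?_) (by fun_prop) (by fun_prop)
    norm_num [hB1 ((hfr hx.2).resolve_left hx.1)]
  have hθ₁₂ (x : Y) : exp (L θ₁ x) = exp (L θ₂ x) := by
    by_cases hx : x ∈ Q
    · simp [L, θ₁, θ₂, hx]
    · simp only [L, θ₁, θ₂, piecewise_eq_of_notMem _ _ _ hx]
      push_cast
      rw [sub_mul, exp_sub, show (2 : ℂ) * (π * I) = 2 * π * I by ring, exp_two_pi_mul_I, div_one]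
  have hf : ContinuousOn (fun x => exp (L θ₁ x)) univ := by
    rw [← compl_empty, ← hAB.inter_eq, compl_inter]
    exact ContinuousOn.union_of_isOpen ((hL hθ₂).cexp.congr fun x _ => hθ₁₂ x) (hL hθ₁).cexp
      hA.isOpen_compl hB.isOpen_compl
  obtain ⟨g, hg, hgf⟩ := hY _ hf fun x _ => exp_ne_zero _
  have hW : P ∪ Q ⊆ Aᶜ ∩ Bᶜ := hcover ▸ (compl_union A B).subset
  have e₁ := hBc.sub_eq_sub_of_exp_eq (hg.mono (subset_univ _)) (hL hθ₁)
    (fun x _ => hgf x trivial) (hW (.inl hp)).2 (hW (.inr hq)).2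
  have e₂ := hAc.sub_eq_sub_of_exp_eq (hg.mono (subset_univ _)) (hL hθ₂)
    (fun x _ => (hgf x trivial).trans (hθ₁₂ x)) (hW (.inl hp)).1 (hW (.inr hq)).1
  have hpQ : p ∉ Q := hPQ.notMem_of_mem_left hp
  simp only [L, θ₁, θ₂, piecewise_eq_of_notMem _ _ _ hpQ, piecewise_eq_of_mem _ _ _ hq] at e₁ e₂
  have : (2 * π * I : ℂ) = 0 := by push_cast at e₁ e₂; linear_combination e₂ - e₁
  simp [Real.pi_ne_zero, I_ne_zero] at this

theorem isConnected_compl_union_of_hasContinuousLogsOn [PreconnectedSpace Y]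
    (hY : HasContinuousLogsOn (univ : Set Y)) {A B : Set Y} (hA : IsClosed A) (hB : IsClosed B)
    (hAB : Disjoint A B) (hAc : IsConnected Aᶜ) (hBc : IsConnected Bᶜ) :
    IsConnected (A ∪ B)ᶜ := by
  have hW : IsOpen (A ∪ B)ᶜ := (hA.union hB).isOpen_compl
  refine ⟨compl_union A B ▸ nonempty_inter hA.isOpen_compl hB.isOpen_compl
    (by rw [← compl_inter, hAB.inter_eq, compl_empty]) hAc.nonempty hBc.nonempty, ?_⟩
  intro u v hu hv huv ⟨p, hp⟩ ⟨q, hq⟩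
  by_contra! huv₀
  rcases eq_empty_or_eq_empty_of_hasContinuousLogsOn hY hA hB hAB hAc.isPreconnected
    hBc.isPreconnected (hW.inter hu) (hW.inter hv)
    (disjoint_iff_inter_eq_empty.mpr (by rw [← inter_inter_distrib_left, huv₀]))
    (by rw [← inter_union_distrib_left, inter_eq_self_of_subset_left huv]) with h | h
  · exact h.subset hp
  · exact h.subset hq

theorem isConnected_compl_biUnion_of_hasContinuousLogsOn [ConnectedSpace Y]
    (hY : HasContinuousLogsOn (univ : Set Y)) {ι : Type*} {Z : ι → Set Y}
    (hZ : ∀ i, IsClosed (Z i)) (hdisj : Pairwise (Disjoint on Z))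
    (hconn : ∀ i, IsConnected (Z i)ᶜ) (s : Finset ι) : IsConnected (⋃ i ∈ s, Z i)ᶜ := by
  classical
  induction s using Finset.induction_on with
  | empty => simpa using isConnected_univ
  | insert a s has ih =>
    rw [Finset.set_biUnion_insert]
    exact isConnected_compl_union_of_hasContinuousLogsOn hY (hZ a)
      (isClosed_biUnion_finset fun i _ => hZ i)
      (disjoint_iUnion₂_right.mpr fun i hi => hdisj (ne_of_mem_of_not_mem hi has).symm)
      (hconn a) ih

end Separation

theorem isConnected_compl_preimage_val_iff {α : Type*} [TopologicalSpace α] {X S : Set α} :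
    IsConnected (X ↓∩ S)ᶜ ↔ IsConnected (X \ S) := by
  have h : Subtype.val '' (X ↓∩ S)ᶜ = X \ S := by ext; simp
  rw [← h, IsConnected, IsConnected, image_nonempty,
    Topology.IsInducing.subtypeVal.isPreconnected_image]

theorem shell_complement_connected_general (d : ℕ) (hd : 2 ≤ d) (ε : ℝ)
    (hε : ε ∈ Set.Ioo (0 : ℝ) 1)
    (X : Set (EuclideanSpace ℝ (Fin (d + 1))))
    (hX : X = Metric.ball 0 1 \ Metric.closedBall 0 (1 - ε))
    (k : ℕ) (Z : Fin k → Set (EuclideanSpace ℝ (Fin (d + 1))))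
    (hclosed : ∀ i, IsClosed {x : X | (x : EuclideanSpace ℝ (Fin (d + 1))) ∈ Z i})
    (hdisj : Pairwise (Function.onFun Disjoint Z))
    (hconn : ∀ i, IsConnected (X \ Z i)) :
    IsConnected (X \ ⋃ i, Z i) := by
  have hrank : 2 < Module.rank ℝ (EuclideanSpace ℝ (Fin (d + 1))) := by
    rw [← Module.finrank_eq_rank, finrank_euclideanSpace_fin]
    exact Nat.cast_lt.mpr (by omega : 2 < d + 1)
  have hl : 0 ≤ 1 - ε := by linarith [hε.2]
  have hlr : 1 - ε < 1 := by linarith [hε.1]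
  subst hX
  have := isConnected_iff_connectedSpace.mp
    (isConnected_shell (Cardinal.one_lt_two.trans hrank) hl hlr)
  simp_rw [← isConnected_compl_preimage_val_iff, preimage_iUnion] at hconn ⊢
  simpa only [Finset.mem_univ, iUnion_true] using
    isConnected_compl_biUnion_of_hasContinuousLogsOn (Z := fun i => _ ↓∩ Z i)
      (hasContinuousLogsOn_shell hrank hl hlr).to_subtype hclosed
      (fun i j hij => (hdisj hij).preimage _) hconn Finset.univ

/-- Let `X` be the open spherical shell `(int B^{d+1}) \ (1-ε)B^{d+1}` in
`ℝ^{d+1}`, `d ≥ 2`, `0 < ε < 1`, and let `Z₁, …, Z_k` be pairwise disjoint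
subsets of `X`, closed in the subspace topology of `X`, such that `X \ Z_i`
is connected for every `i`.  Then `X \ (Z₁ ∪ ⋯ ∪ Z_k)` is connected. -/
theorem shell_complement_connected (d : ℕ) (hd : 2 ≤ d) (ε : ℝ)
    (hε : ε ∈ Set.Ioo (0 : ℝ) 1)
    (X : Set (EuclideanSpace ℝ (Fin (d + 1))))
    (hX : X = Metric.ball 0 1 \ Metric.closedBall 0 (1 - ε))
    (k : ℕ) (hk : 1 ≤ k) (Z : Fin k → Set (EuclideanSpace ℝ (Fin (d + 1))))
    (hZX : ∀ i, Z i ⊆ X)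
    (hclosed : ∀ i, IsClosed {x : X | (x : EuclideanSpace ℝ (Fin (d + 1))) ∈ Z i})
    (hdisj : Pairwise (Function.onFun Disjoint Z))
    (hconn : ∀ i, IsConnected (X \ Z i)) :
    IsConnected (X \ ⋃ i, Z i) :=
  shell_complement_connected_general d hd ε hε X hX k Z hclosed hdisj hconn
end

section
/- Let S₁, …, S_k be closed half-spaces in ℝ^d with outer unit normal vectors u₁, …, u_k. Then there exist unit vectors v₁, …, v_m with ⟨u_i, v_j⟩ ≤ 0 for all i, j, such that for any closed half-spaces S′₁, …, S′_m with outer unit normals v₁, …, v_m respectively, the intersection (∩ᵢ S_i) ∩ (∩ⱼ S′_j) is bounded. -/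
open scoped RealInnerProductSpace

/-- Given closed half-spaces `Sᵢ = {x : ⟪x, uᵢ⟫ ≤ cᵢ}` in `ℝ^d` with outer
unit normals `uᵢ`, there exist unit vectors `v₁, …, v_m` with
`⟪uᵢ, vⱼ⟫ ≤ 0` for all `i, j`, such that for arbitrary closed half-spaces
with outer unit normals `v₁, …, v_m`, the intersection of all the
half-spaces is bounded. -/
theorem bounding_halfspaces (d k : ℕ) (u : Fin k → EuclideanSpace ℝ (Fin d))
    (hu : ∀ i, ‖u i‖ = 1) (c : Fin k → ℝ) :
    ∃ (m : ℕ) (v : Fin m → EuclideanSpace ℝ (Fin d)),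
      (∀ j, ‖v j‖ = 1) ∧ (∀ i j, ⟪u i, v j⟫ ≤ 0) ∧
      ∀ c' : Fin m → ℝ,
        Bornology.IsBounded
          ({x : EuclideanSpace ℝ (Fin d) | ∀ i, ⟪x, u i⟫ ≤ c i} ∩
            {x : EuclideanSpace ℝ (Fin d) | ∀ j, ⟪x, v j⟫ ≤ c' j}) := by
  classical
  set K : Set (EuclideanSpace ℝ (Fin d)) := {y | (∀ i, ⟪y, u i⟫ ≤ 0) ∧ ‖y‖ = 1} with hKdef
  have hKsub : K ⊆ Metric.sphere (0 : (EuclideanSpace ℝ (Fin d))) 1 := by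
    intro y hy
    simp [hy.2]
  have hKcompact : IsCompact K := by
    refine (isCompact_sphere (0 : (EuclideanSpace ℝ (Fin d))) 1).of_isClosed_subset ?_ hKsub
    have h1 : IsClosed {y : (EuclideanSpace ℝ (Fin d)) | ∀ i, ⟪y, u i⟫ ≤ 0} := by
      have : {y : (EuclideanSpace ℝ (Fin d)) | ∀ i, ⟪y, u i⟫ ≤ 0} = ⋂ i, {y : (EuclideanSpace ℝ (Fin d)) | ⟪y, u i⟫ ≤ 0} := by
        ext y; simp
      rw [this]
      exact isClosed_iInter fun i =>
        isClosed_le (continuous_id.inner continuous_const) continuous_const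
    have h2 : IsClosed {y : (EuclideanSpace ℝ (Fin d)) | ‖y‖ = 1} :=
      isClosed_eq continuous_norm continuous_const
    exact (h1.inter h2)
  -- open cover
  have hUopen : ∀ y : K, IsOpen {z : (EuclideanSpace ℝ (Fin d)) | 0 < ⟪z, (y : (EuclideanSpace ℝ (Fin d)))⟫} := fun y =>
    isOpen_lt continuous_const (continuous_id.inner continuous_const)
  have hcover : K ⊆ ⋃ y : K, {z : (EuclideanSpace ℝ (Fin d)) | 0 < ⟪z, (y : (EuclideanSpace ℝ (Fin d)))⟫} := by
    intro y hy
    refine Set.mem_iUnion.2 ⟨⟨y, hy⟩, ?_⟩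
    have : ⟪y, y⟫ = (1 : ℝ) := by
      rw [real_inner_self_eq_norm_sq, hy.2]; norm_num
    simp only [Set.mem_setOf_eq, this]
    norm_num
  obtain ⟨t, ht⟩ := hKcompact.elim_finite_subcover _ hUopen hcover
  refine ⟨t.card, fun j => ((t.equivFin.symm j : K) : (EuclideanSpace ℝ (Fin d))), ?_, ?_, ?_⟩
  · intro j
    exact ((t.equivFin.symm j : K)).2.2
  · intro i j
    have h := ((t.equivFin.symm j : K)).2.1 i
    rw [real_inner_comm]
    exact h
  · intro c'
    by_contra hB
    rw [isBounded_iff_forall_norm_le] at hB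
    push_neg at hB
    have hx : ∀ n : ℕ, ∃ x : (EuclideanSpace ℝ (Fin d)),
        ((∀ i, ⟪x, u i⟫ ≤ c i) ∧
          (∀ j, ⟪x, ((t.equivFin.symm j : K) : (EuclideanSpace ℝ (Fin d)))⟫ ≤ c' j)) ∧ (n : ℝ) < ‖x‖ := by
      intro n
      obtain ⟨x, hx1, hx2⟩ := hB n
      exact ⟨x, ⟨hx1.1, hx1.2⟩, hx2⟩
    choose x hxS hxn using hx
    have hxpos : ∀ n, (0 : ℝ) < ‖x n‖ := fun n =>
      lt_of_le_of_lt (Nat.cast_nonneg n) (hxn n)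
    set y : ℕ → (EuclideanSpace ℝ (Fin d)) := fun n => ‖x n‖⁻¹ • x n with hydef
    have hy1 : ∀ n, y n ∈ Metric.sphere (0 : (EuclideanSpace ℝ (Fin d))) 1 := by
      intro n
      simp only [mem_sphere_iff_norm, sub_zero, hydef, norm_smul, norm_inv,
        norm_norm]
      rw [inv_mul_cancel₀ (hxpos n).ne']
    obtain ⟨z, hz, φ, hφ, hyz⟩ :=
      (isCompact_sphere (0 : (EuclideanSpace ℝ (Fin d))) 1).tendsto_subseq hy1
    have hnorm_top : Filter.Tendsto (fun n => ‖x (φ n)‖) Filter.atTop Filter.atTop := by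
      exact Filter.tendsto_atTop_mono
        (fun n => le_trans (Nat.cast_le.2 (hφ.le_apply)) (hxn (φ n)).le)
        tendsto_natCast_atTop_atTop
    have hinv0 : Filter.Tendsto (fun n => ‖x (φ n)‖⁻¹) Filter.atTop (nhds 0) :=
      Filter.Tendsto.inv_tendsto_atTop hnorm_top
    have key : ∀ (w : (EuclideanSpace ℝ (Fin d))) (b : ℝ), (∀ n, ⟪x n, w⟫ ≤ b) → ⟪z, w⟫ ≤ 0 := by
      intro w b hb
      have hle : ∀ n, ⟪y (φ n), w⟫ ≤ ‖x (φ n)‖⁻¹ * b := by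
        intro n
        have : ⟪y (φ n), w⟫ = ‖x (φ n)‖⁻¹ * ⟪x (φ n), w⟫ :=
          real_inner_smul_left (x (φ n)) w (‖x (φ n)‖⁻¹)
        rw [this]
        exact mul_le_mul_of_nonneg_left (hb (φ n)) (inv_nonneg.2 (hxpos _).le)
      have hlhs : Filter.Tendsto (fun n => ⟪y (φ n), w⟫) Filter.atTop (nhds ⟪z, w⟫) :=
        ((continuous_id.inner continuous_const).tendsto z).comp hyz
      have hrhs : Filter.Tendsto (fun n => ‖x (φ n)‖⁻¹ * b) Filter.atTop (nhds 0) := by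
        have := hinv0.mul_const b
        rwa [zero_mul] at this
      exact le_of_tendsto_of_tendsto' hlhs hrhs hle
    have hzK : z ∈ K := by
      refine ⟨fun i => key (u i) (c i) (fun n => (hxS n).1 i), ?_⟩
      simpa using hz
    obtain ⟨w, hwmem⟩ := Set.mem_iUnion.1 (ht hzK)
    simp only [Set.mem_iUnion, Set.mem_setOf_eq] at hwmem
    obtain ⟨hwt, hwpos⟩ := hwmem
    set j := t.equivFin ⟨w, hwt⟩ with hjdef
    have hvj : ((t.equivFin.symm j : K) : (EuclideanSpace ℝ (Fin d))) = (w : (EuclideanSpace ℝ (Fin d))) := by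
      rw [hjdef, Equiv.symm_apply_apply]
    have := key ((w : K) : (EuclideanSpace ℝ (Fin d))) (c' j) (fun n => by
      have h := (hxS n).2 j
      rwa [hvj] at h)
    exact absurd hwpos (not_lt.2 this)
end

section
/- Let u, v be unit vectors in ℝ³ and α, β ∈ (0, π/2) such that the angle between u and v equals α + β. If a line segment joins the points u/cos α and v/cos β, then this segment is tangent to the unit sphere, and the point of tangency divides the segment into pieces of lengths tan α and tan β. -/
open Real
open scoped RealInnerProductSpace

/-!
The tangency point is `p = (sin β • u + sin α • v) / sin (α + β)`. Since `⟪u, v⟫ = cos (α + β)`,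
the addition formulas give `⟪p, u⟫ = cos α` and `⟪p, v⟫ = cos β`, hence `‖p‖ = 1`, and both
endpoints `u / cos α`, `v / cos β` (so the whole segment) lie in the tangent plane `⟪p, ·⟫ = 1`.
For `x` in that plane Pythagoras gives `‖x‖² = 1 + ‖x - p‖²`: every point of the segment other than
`p` lies strictly outside the ball, and `‖u / cos α - p‖² = 1 / cos² α - 1 = tan² α`.
-/

section

variable {E : Type*} [NormedAddCommGroup E] [InnerProductSpace ℝ E]

theorem norm_sq_eq_norm_sq_add_norm_sub_sq_of_inner_eq {p x : E} (h : ⟪p, x⟫ = ‖p‖ ^ 2) :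
    ‖x‖ ^ 2 = ‖p‖ ^ 2 + ‖x - p‖ ^ 2 := by
  have hperp : ⟪p, x - p⟫ = 0 := by
    rw [inner_sub_right, h, real_inner_self_eq_norm_sq, sub_self]
  simpa [sq] using norm_add_sq_eq_norm_sq_add_norm_sq_real hperp

theorem inner_eq_of_mem_segment {p A B q : E} {c : ℝ} (hA : ⟪p, A⟫ = c) (hB : ⟪p, B⟫ = c)
    (hq : q ∈ segment ℝ A B) : ⟪p, q⟫ = c :=
  (convex_hyperplane (innerₛₗ ℝ p).isLinear c).segment_subset hA hB hq

theorem one_le_norm_and_eq_of_mem_segment {p A B q : E} (hp : ‖p‖ = 1) (hA : ⟪p, A⟫ = 1)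
    (hB : ⟪p, B⟫ = 1) (hq : q ∈ segment ℝ A B) : 1 ≤ ‖q‖ ∧ (‖q‖ = 1 → q = p) := by
  have hpyth := norm_sq_eq_norm_sq_add_norm_sub_sq_of_inner_eq (x := q)
    (by rw [inner_eq_of_mem_segment hA hB hq, hp, one_pow])
  rw [hp] at hpyth
  refine ⟨?_, fun hq1 => ?_⟩
  · nlinarith [norm_nonneg q, sq_nonneg ‖q - p‖]
  · rw [hq1] at hpyth
    exact sub_eq_zero.mp (norm_eq_zero.mp (pow_eq_zero_iff two_ne_zero |>.mp (by linarith)))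

theorem inner_inv_cos_smul_eq_one {p u : E} {α : ℝ} (hpu : ⟪p, u⟫ = cos α) (hα : cos α ≠ 0) :
    ⟪p, (cos α)⁻¹ • u⟫ = 1 := by
  rw [real_inner_smul_right, hpu, inv_mul_cancel₀ hα]

theorem dist_inv_cos_smul_eq_tan {p u : E} {α : ℝ} (hp : ‖p‖ = 1) (hu : ‖u‖ = 1)
    (hpu : ⟪p, u⟫ = cos α) (hα : α ∈ Set.Ico 0 (π / 2)) :
    dist ((cos α)⁻¹ • u) p = tan α := by
  have hcos : 0 < cos α := cos_pos_of_mem_Ioo ⟨by linarith [hα.1, pi_pos], hα.2⟩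
  have hpyth := norm_sq_eq_norm_sq_add_norm_sub_sq_of_inner_eq
    (by rw [inner_inv_cos_smul_eq_one hpu hcos.ne', hp, one_pow])
  rw [hp, norm_smul, hu, mul_one, norm_inv, norm_of_nonneg hcos.le] at hpyth
  have htan_sq : tan α ^ 2 = (cos α)⁻¹ ^ 2 - 1 := by
    rw [inv_pow, ← inv_one_add_tan_sq hcos.ne', inv_inv]
    ring
  rw [dist_eq_norm, ← pow_left_inj₀ (norm_nonneg _)
    (tan_nonneg_of_nonneg_of_le_pi_div_two hα.1 hα.2.le) two_ne_zero]
  linarith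

noncomputable def tangencyPoint (u v : E) (α β : ℝ) : E :=
  (sin (α + β))⁻¹ • (sin β • u + sin α • v)

theorem tangencyPoint_comm (u v : E) (α β : ℝ) :
    tangencyPoint v u β α = tangencyPoint u v α β := by
  rw [tangencyPoint, tangencyPoint, add_comm β, add_comm (sin α • v)]

variable {u v : E} {α β : ℝ}

theorem inner_tangencyPoint_left (hu : ‖u‖ = 1) (huv : ⟪u, v⟫ = cos (α + β))
    (hs : sin (α + β) ≠ 0) : ⟪tangencyPoint u v α β, u⟫ = cos α := by
  have hsinβ : sin β = sin (α + β) * cos α - cos (α + β) * sin α := by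
    rw [← sin_sub, add_sub_cancel_left]
  rw [tangencyPoint, real_inner_smul_left, inner_add_left, real_inner_smul_left,
    real_inner_smul_left, real_inner_self_eq_norm_sq, hu, real_inner_comm, huv, hsinβ]
  field_simp
  ring

theorem inner_tangencyPoint_right (hv : ‖v‖ = 1) (huv : ⟪u, v⟫ = cos (α + β))
    (hs : sin (α + β) ≠ 0) : ⟪tangencyPoint u v α β, v⟫ = cos β := by
  rw [← tangencyPoint_comm]
  exact inner_tangencyPoint_left hv (by rw [real_inner_comm, huv, add_comm]) (by rwa [add_comm])

theorem norm_tangencyPoint (hu : ‖u‖ = 1) (hv : ‖v‖ = 1) (huv : ⟪u, v⟫ = cos (α + β))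
    (hs : sin (α + β) ≠ 0) : ‖tangencyPoint u v α β‖ = 1 := by
  have hsq : ‖tangencyPoint u v α β‖ ^ 2 = 1 := by
    rw [← real_inner_self_eq_norm_sq]
    nth_rw 2 [tangencyPoint]
    rw [inner_smul_right, inner_add_right, real_inner_smul_right, real_inner_smul_right,
      inner_tangencyPoint_left hu huv hs, inner_tangencyPoint_right hv huv hs,
      inv_mul_eq_one₀ hs, sin_add]
    ring
  rwa [← pow_left_inj₀ (norm_nonneg _) zero_le_one two_ne_zero, one_pow]

theorem tangencyPoint_mem_segment (hα : α ∈ Set.Ioo 0 (π / 2)) (hβ : β ∈ Set.Ioo 0 (π / 2)) :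
    tangencyPoint u v α β ∈ segment ℝ ((cos α)⁻¹ • u) ((cos β)⁻¹ • v) := by
  have hcα : 0 < cos α := cos_pos_of_mem_Ioo ⟨by linarith [hα.1, pi_pos], hα.2⟩
  have hcβ : 0 < cos β := cos_pos_of_mem_Ioo ⟨by linarith [hβ.1, pi_pos], hβ.2⟩
  have hsα : 0 < sin α := sin_pos_of_pos_of_lt_pi hα.1 (by linarith [hα.2, pi_pos])
  have hsβ : 0 < sin β := sin_pos_of_pos_of_lt_pi hβ.1 (by linarith [hβ.2, pi_pos])
  have hs : 0 < sin (α + β) := by rw [sin_add]; positivity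
  refine ⟨(sin (α + β))⁻¹ * (sin β * cos α), (sin (α + β))⁻¹ * (sin α * cos β),
    by positivity, by positivity, ?_, ?_⟩
  · rw [← mul_add, inv_mul_eq_one₀ hs.ne', sin_add]
    ring
  · rw [tangencyPoint, smul_smul, smul_smul, smul_add, smul_smul, smul_smul]
    congr 2 <;> field_simp

end

/-- If `u, v` are unit vectors in `ℝ³` with angle `α + β` between them,
`α, β ∈ (0, π/2)`, then the segment joining `u / cos α` and `v / cos β` is
tangent to the unit sphere: it touches it at exactly one point, lies outside
the open unit ball, and the tangency point divides the segment into pieces of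
lengths `tan α` and `tan β`. -/
theorem segment_tangent_to_sphere (u v : EuclideanSpace ℝ (Fin 3))
    (hu : ‖u‖ = 1) (hv : ‖v‖ = 1) (α β : ℝ)
    (hα : α ∈ Set.Ioo 0 (π / 2)) (hβ : β ∈ Set.Ioo 0 (π / 2))
    (hangle : Real.arccos ⟪u, v⟫ = α + β) :
    ∃ p ∈ segment ℝ ((Real.cos α)⁻¹ • u) ((Real.cos β)⁻¹ • v),
      ‖p‖ = 1 ∧
      (∀ q ∈ segment ℝ ((Real.cos α)⁻¹ • u) ((Real.cos β)⁻¹ • v),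
        1 ≤ ‖q‖ ∧ (‖q‖ = 1 → q = p)) ∧
      dist ((Real.cos α)⁻¹ • u) p = Real.tan α ∧
      dist ((Real.cos β)⁻¹ • v) p = Real.tan β := by
  have hinner := abs_le.mp ((abs_real_inner_le_norm u v).trans_eq (by rw [hu, hv, one_mul]))
  have huv : ⟪u, v⟫ = cos (α + β) := by rw [← hangle, cos_arccos hinner.1 hinner.2]
  have hs : sin (α + β) ≠ 0 :=
    (sin_pos_of_pos_of_lt_pi (by linarith [hα.1, hβ.1]) (by linarith [hα.2, hβ.2])).ne'
  have hpu := inner_tangencyPoint_left hu huv hs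
  have hpv := inner_tangencyPoint_right hv huv hs
  have hp := norm_tangencyPoint hu hv huv hs
  have hcα : cos α ≠ 0 := (cos_pos_of_mem_Ioo ⟨by linarith [hα.1, pi_pos], hα.2⟩).ne'
  have hcβ : cos β ≠ 0 := (cos_pos_of_mem_Ioo ⟨by linarith [hβ.1, pi_pos], hβ.2⟩).ne'
  refine ⟨tangencyPoint u v α β, tangencyPoint_mem_segment hα hβ, hp,
    fun q hq => one_le_norm_and_eq_of_mem_segment hp (inner_inv_cos_smul_eq_one hpu hcα)
      (inner_inv_cos_smul_eq_one hpv hcβ) hq,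
    dist_inv_cos_smul_eq_tan hp hu hpu (Set.Ioo_subset_Ico_self hα),
    dist_inv_cos_smul_eq_tan hp hv hpv (Set.Ioo_subset_Ico_self hβ)⟩
end

section
/- Let v_a, v_b, v_c be unit vectors in ℝ³ and α_a, α_b, α_c ∈ (0, π/2) such that the pairwise angles satisfy ∠(v_x, v_y) = α_x + α_y for each pair. Writing t_x = tan α_x, the volume of the tetrahedron with vertices o, v_a/cos α_a, v_b/cos α_b, v_c/cos α_c equals (1/3)·√(t_a t_b t_c (t_a + t_b + t_c − t_a t_b t_c)). -/
/-!
Let `w_x = v_x / cos α_x`. The tetrahedron is the image of the corner simplex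
`{x ≥ 0, x₀ + x₁ + x₂ ≤ 1}`, of volume `1/3!`, under the linear map sending the standard basis to
`w_a, w_b, w_c`; its volume is therefore `|det| / 6 = √(det G) / 6` with `G` the Gram matrix of the
`w_x`. Since `⟪v_x, v_y⟫ = cos (α_x + α_y)`, the entries of `G` are `1 + t_x²` on the diagonal and
`1 - t_x t_y` off it, and `det G = 4 t_a t_b t_c (t_a + t_b + t_c - t_a t_b t_c)`.
-/

open Real MeasureTheory Matrix
open scoped RealInnerProductSpace

def cornerSimplex (ι : Type*) [Fintype ι] (c : ℝ) : Set (ι → ℝ) :=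
  {x | (∀ i, 0 ≤ x i) ∧ ∑ i, x i ≤ c}

section CornerSimplex

variable {ι : Type*} [Fintype ι] {n : ℕ} {c : ℝ}

lemma isClosed_cornerSimplex : IsClosed (cornerSimplex ι c) := by
  simp only [cornerSimplex, Set.ofPred_and, Set.ofPred_forall]
  exact (isClosed_iInter fun i => isClosed_le continuous_const (continuous_apply i)).inter
    (isClosed_le (by fun_prop) continuous_const)

lemma cornerSimplex_eq_empty (hc : c < 0) : cornerSimplex ι c = ∅ :=
  Set.eq_empty_of_forall_notMem fun _ ⟨h0, hs⟩ =>
    (hs.trans_lt hc).not_ge (Finset.sum_nonneg fun i _ => h0 i)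

lemma cornerSimplex_fin_zero : cornerSimplex (Fin 0) c = if 0 ≤ c then Set.univ else ∅ := by
  split_ifs with hc <;> ext x <;> simp [cornerSimplex, hc]

lemma piFinSuccAbove_symm_preimage_cornerSimplex :
    (MeasurableEquiv.piFinSuccAbove (fun _ => ℝ) 0).symm ⁻¹' cornerSimplex (Fin (n + 1)) c =
      {p | 0 ≤ p.1 ∧ p.2 ∈ cornerSimplex (Fin n) (c - p.1)} := by
  ext p
  simp [cornerSimplex, MeasurableEquiv.piFinSuccAbove, Fin.sum_univ_succ, Fin.forall_fin_succ,
    le_sub_iff_add_le', and_assoc]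

lemma volume_slice_cornerSimplex (a : ℝ)
    (ih : ∀ c', 0 ≤ c' → volume (cornerSimplex (Fin n) c') = .ofReal (c' ^ n / n.factorial)) :
    volume (Prod.mk a ⁻¹' {p : ℝ × (Fin n → ℝ) | 0 ≤ p.1 ∧ p.2 ∈ cornerSimplex (Fin n) (c - p.1)}) =
      (Set.Icc 0 c).indicator (fun a => .ofReal ((c - a) ^ n / n.factorial)) a := by
  by_cases ha : a ∈ Set.Icc 0 c
  · simp [ha.1, Set.indicator_of_mem ha, ih _ (sub_nonneg.2 ha.2)]
  rw [Set.indicator_of_notMem ha]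
  rcases lt_or_ge a 0 with ha0 | ha0
  · simp [not_le.2 ha0]
  · have hca : c - a < 0 := by
      simp only [Set.mem_Icc, not_and, not_le] at ha
      linarith [ha ha0]
    simp [cornerSimplex_eq_empty hca]

lemma integral_Icc_sub_pow_div_factorial (hc : 0 ≤ c) (n : ℕ) :
    ∫ a in Set.Icc 0 c, (c - a) ^ n / n.factorial = c ^ (n + 1) / (n + 1).factorial := by
  rw [integral_Icc_eq_integral_Ioc, ← intervalIntegral.integral_of_le hc,
    intervalIntegral.integral_div, intervalIntegral.integral_comp_sub_left (fun x => x ^ n) c,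
    sub_self, sub_zero, integral_pow, zero_pow n.succ_ne_zero, sub_zero, Nat.factorial_succ]
  push_cast
  field_simp

theorem volume_cornerSimplex (n : ℕ) (hc : 0 ≤ c) :
    volume (cornerSimplex (Fin n) c) = .ofReal (c ^ n / n.factorial) := by
  induction n generalizing c with
  | zero => simp [cornerSimplex_fin_zero, hc, volume_pi]
  | succ n ih =>
    have hmeas := (isClosed_cornerSimplex (ι := Fin (n + 1)) (c := c)).measurableSet.preimage
      (MeasurableEquiv.piFinSuccAbove (fun _ : Fin (n + 1) => ℝ) 0).symm.measurable
    rw [← ((volume_preserving_piFinSuccAbove (fun _ => ℝ) 0).symm).measure_preimage_equiv,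
      Measure.volume_eq_prod, Measure.prod_apply hmeas, piFinSuccAbove_symm_preimage_cornerSimplex]
    simp_rw [volume_slice_cornerSimplex _ (fun c' hc' => ih hc')]
    rw [lintegral_indicator measurableSet_Icc, ← ofReal_integral_eq_lintegral_ofReal,
      integral_Icc_sub_pow_div_factorial hc]
    · exact Continuous.integrableOn_Icc (by fun_prop)
    · exact ae_restrict_of_forall_mem measurableSet_Icc fun x hx =>
        div_nonneg (pow_nonneg (sub_nonneg.2 hx.2) n) (by positivity)

lemma image_stdSimplex_option_funLeft_some :
    LinearMap.funLeft ℝ ℝ (some : ι → Option ι) '' stdSimplex ℝ (Option ι) = cornerSimplex ι 1 := by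
  ext x
  simp only [Set.mem_image, stdSimplex, cornerSimplex, Set.mem_ofPred_eq, Fintype.sum_option,
    Option.forall]
  constructor
  · rintro ⟨y, ⟨⟨hnone, hsome⟩, hsum⟩, rfl⟩
    exact ⟨hsome, by simp only [LinearMap.funLeft_apply]; linarith⟩
  · rintro ⟨hx, hsum⟩
    exact ⟨fun o => o.elim (1 - ∑ i, x i) x, ⟨⟨sub_nonneg.2 hsum, hx⟩, by simp⟩, rfl⟩

lemma convexHull_insert_zero_range_single [DecidableEq ι] :
    convexHull ℝ (insert 0 (Set.range fun i : ι => (Pi.single i 1 : ι → ℝ))) =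
      cornerSimplex ι 1 := by
  have hbasis : LinearMap.funLeft ℝ ℝ (some : ι → Option ι) ''
      Set.range (fun o o' : Option ι => if o = o' then (1 : ℝ) else 0) =
      insert 0 (Set.range fun i : ι => (Pi.single i 1 : ι → ℝ)) := by
    rw [← Set.range_comp, Option.range_eq]
    congr 1
    refine congrArg Set.range (funext fun i => funext fun j => ?_)
    simp [Pi.single_apply, eq_comm]
  rw [← hbasis, ← LinearMap.image_convexHull, convexHull_basis_eq_stdSimplex,
    image_stdSimplex_option_funLeft_some]

end CornerSimplex

lemma EuclideanSpace.volume_image_toLp {ι : Type*} [Fintype ι] (s : Set (ι → ℝ)) :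
    volume (WithLp.toLp 2 '' s : Set (EuclideanSpace ℝ ι)) = volume s := by
  rw [← (EuclideanSpace.volume_preserving_symm_measurableEquiv_toLp ι).measure_preimage_equiv s,
    ← MeasurableEquiv.image_eq_preimage_symm]
  rfl

lemma EuclideanSpace.det_gram {ι : Type*} [Fintype ι] [DecidableEq ι]
    (v : ι → EuclideanSpace ℝ ι) : (gram ℝ v).det = (of fun i j => v j i).det ^ 2 := by
  rw [show gram ℝ v = (of fun i j => v j i)ᵀ * of fun i j => v j i by
    simpa using gram_eq_conjTranspose_mul (EuclideanSpace.basisFun ι ℝ) v,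
    det_mul, det_transpose, sq]

theorem EuclideanSpace.volume_convexHull_insert_zero_range {n : ℕ}
    (v : Fin n → EuclideanSpace ℝ (Fin n)) :
    volume (convexHull ℝ (insert 0 (Set.range v))) =
      .ofReal (√(gram ℝ v).det / n.factorial) := by
  set M : Matrix (Fin n) (Fin n) ℝ := of fun i j => v j i
  let L : (Fin n → ℝ) →ₗ[ℝ] EuclideanSpace ℝ (Fin n) :=
    toLpLin 2 2 M ∘ₗ (WithLp.linearEquiv 2 ℝ (Fin n → ℝ)).symm.toLinearMap
  have hv : insert 0 (Set.range v) = L '' insert 0 (Set.range fun i => Pi.single i 1) := by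
    rw [Set.image_insert_eq, map_zero, ← Set.range_comp]
    congr 2
    ext j i
    simp [L, M, toLpLin_apply]
  have hdet : √(gram ℝ v).det = |M.det| := by
    rw [EuclideanSpace.det_gram, Real.sqrt_sq_eq_abs]
  calc volume (convexHull ℝ (insert 0 (Set.range v)))
      = volume (toLpLin 2 2 M '' (WithLp.toLp 2 '' cornerSimplex (Fin n) 1)) := by
        rw [hv, ← LinearMap.image_convexHull, convexHull_insert_zero_range_single, Set.image_image]
        rfl
    _ = .ofReal |M.det| * .ofReal (1 / n.factorial) := by
        rw [Measure.addHaar_image_linearMap, EuclideanSpace.volume_image_toLp,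
          volume_cornerSimplex n zero_le_one, toLpLin_eq_toLin, LinearMap.det_toLin, one_pow]
    _ = .ofReal (√(gram ℝ v).det / n.factorial) := by
        rw [← ENNReal.ofReal_mul (abs_nonneg _), hdet, mul_one_div]

section UnitVectors

variable {F : Type*} [NormedAddCommGroup F] [InnerProductSpace ℝ F] {u v : F} {α β θ : ℝ}

lemma inner_eq_cos_of_arccos_inner_eq (hu : ‖u‖ = 1) (hv : ‖v‖ = 1) (h : arccos ⟪u, v⟫ = θ) :
    ⟪u, v⟫ = cos θ := by
  have hle : |⟪u, v⟫| ≤ 1 := by simpa [hu, hv] using abs_real_inner_le_norm u v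
  rw [← h, cos_arccos (abs_le.1 hle).1 (abs_le.1 hle).2]

lemma norm_inv_cos_smul_sq (hu : ‖u‖ = 1) (hα : cos α ≠ 0) :
    ‖(cos α)⁻¹ • u‖ ^ 2 = 1 + tan α ^ 2 := by
  rw [norm_smul, hu, mul_one, norm_inv, Real.norm_eq_abs, inv_pow, sq_abs,
    ← inv_one_add_tan_sq hα, inv_inv]

lemma inner_inv_cos_smul_of_inner_eq_cos_add (h : ⟪u, v⟫ = cos (α + β)) (hα : cos α ≠ 0)
    (hβ : cos β ≠ 0) : ⟪(cos α)⁻¹ • u, (cos β)⁻¹ • v⟫ = 1 - tan α * tan β := by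
  rw [real_inner_smul_left, real_inner_smul_right, h, cos_add, tan_eq_sin_div_cos,
    tan_eq_sin_div_cos]
  field_simp

end UnitVectors

lemma det_tangent_gram (a b c : ℝ) :
    !![1 + a ^ 2, 1 - a * b, 1 - a * c; 1 - a * b, 1 + b ^ 2, 1 - b * c;
      1 - a * c, 1 - b * c, 1 + c ^ 2].det = 4 * (a * b * c * (a + b + c - a * b * c)) := by
  simp only [det_fin_three, of_apply, cons_val', cons_val_zero, cons_val_one, cons_val_two,
    empty_val', cons_val_fin_one, head_cons, head_fin_const, tail_cons]
  ring

theorem tetrahedron_volume_general (va vb vc : EuclideanSpace ℝ (Fin 3))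
    (hva : ‖va‖ = 1) (hvb : ‖vb‖ = 1) (hvc : ‖vc‖ = 1)
    (αa αb αc : ℝ)
    (ha : αa ∈ Set.Ioo 0 (π / 2)) (hb : αb ∈ Set.Ioo 0 (π / 2))
    (hc : αc ∈ Set.Ioo 0 (π / 2))
    (hab : Real.arccos ⟪va, vb⟫ = αa + αb)
    (hbc : Real.arccos ⟪vb, vc⟫ = αb + αc)
    (hac : Real.arccos ⟪va, vc⟫ = αa + αc) :
    (volume (convexHull ℝ
        ({0, (Real.cos αa)⁻¹ • va, (Real.cos αb)⁻¹ • vb,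
          (Real.cos αc)⁻¹ • vc} : Set (EuclideanSpace ℝ (Fin 3))))).toReal =
      (1 / 3) * Real.sqrt (Real.tan αa * Real.tan αb * Real.tan αc *
        (Real.tan αa + Real.tan αb + Real.tan αc -
          Real.tan αa * Real.tan αb * Real.tan αc)) := by
  have hcos {α : ℝ} (hα : α ∈ Set.Ioo 0 (π / 2)) : cos α ≠ 0 :=
    (cos_pos_of_mem_Ioo ⟨by linarith [hα.1, pi_pos], hα.2⟩).ne'
  have hab' := inner_inv_cos_smul_of_inner_eq_cos_add
    (inner_eq_cos_of_arccos_inner_eq hva hvb hab) (hcos ha) (hcos hb)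
  have hbc' := inner_inv_cos_smul_of_inner_eq_cos_add
    (inner_eq_cos_of_arccos_inner_eq hvb hvc hbc) (hcos hb) (hcos hc)
  have hac' := inner_inv_cos_smul_of_inner_eq_cos_add
    (inner_eq_cos_of_arccos_inner_eq hva hvc hac) (hcos ha) (hcos hc)
  set w := ![(cos αa)⁻¹ • va, (cos αb)⁻¹ • vb, (cos αc)⁻¹ • vc]
  have hgram : gram ℝ w = !![1 + tan αa ^ 2, 1 - tan αa * tan αb, 1 - tan αa * tan αc;
      1 - tan αa * tan αb, 1 + tan αb ^ 2, 1 - tan αb * tan αc;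
      1 - tan αa * tan αc, 1 - tan αb * tan αc, 1 + tan αc ^ 2] := by
    ext i j
    fin_cases i <;> fin_cases j <;>
      simp [w, hab', hbc', hac', real_inner_comm ((cos αa)⁻¹ • va),
        real_inner_comm ((cos αb)⁻¹ • vb), norm_inv_cos_smul_sq hva (hcos ha),
        norm_inv_cos_smul_sq hvb (hcos hb), norm_inv_cos_smul_sq hvc (hcos hc)]
  have hvertices : ({0, (cos αa)⁻¹ • va, (cos αb)⁻¹ • vb, (cos αc)⁻¹ • vc} :
      Set (EuclideanSpace ℝ (Fin 3))) = insert 0 (Set.range w) := by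
    rw [range_cons, range_cons, range_cons, range_empty, Set.union_empty]
    rfl
  rw [hvertices, EuclideanSpace.volume_convexHull_insert_zero_range, hgram, det_tangent_gram,
    ENNReal.toReal_ofReal (by positivity), sqrt_mul zero_le_four,
    show (4 : ℝ) = 2 ^ 2 by norm_num, sqrt_sq zero_le_two]
  norm_num [Nat.factorial]
  ring

/-- If `v_a, v_b, v_c` are unit vectors in `ℝ³` with pairwise angles
`α_x + α_y`, `α_x ∈ (0, π/2)`, `α_a + α_b + α_c < π`, then the volume of the
tetrahedron with vertices `o, v_a/cos α_a, v_b/cos α_b, v_c/cos α_c` equals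
`(1/3) √(t_a t_b t_c (t_a + t_b + t_c − t_a t_b t_c))`, where `t_x = tan α_x`. -/
theorem tetrahedron_volume (va vb vc : EuclideanSpace ℝ (Fin 3))
    (hva : ‖va‖ = 1) (hvb : ‖vb‖ = 1) (hvc : ‖vc‖ = 1)
    (αa αb αc : ℝ)
    (ha : αa ∈ Set.Ioo 0 (π / 2)) (hb : αb ∈ Set.Ioo 0 (π / 2))
    (hc : αc ∈ Set.Ioo 0 (π / 2))
    (hab : Real.arccos ⟪va, vb⟫ = αa + αb)
    (hbc : Real.arccos ⟪vb, vc⟫ = αb + αc)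
    (hac : Real.arccos ⟪va, vc⟫ = αa + αc)
    (hsum : αa + αb + αc < π) :
    (volume (convexHull ℝ
        ({0, (Real.cos αa)⁻¹ • va, (Real.cos αb)⁻¹ • vb,
          (Real.cos αc)⁻¹ • vc} : Set (EuclideanSpace ℝ (Fin 3))))).toReal =
      (1 / 3) * Real.sqrt (Real.tan αa * Real.tan αb * Real.tan αc *
        (Real.tan αa + Real.tan αb + Real.tan αc -
          Real.tan αa * Real.tan αb * Real.tan αc)) :=
  tetrahedron_volume_general va vb vc hva hvb hvc αa αb αc ha hb hc hab hbc hac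
end

section
/- Let v_a, v_b, v_c be linearly independent unit vectors in ℝ³ with pairwise angles α_x + α_y (α_x ∈ (0, π/2)). The circumcenter p of the tetrahedron with vertices o, v_a/cos α_a, v_b/cos α_b, v_c/cos α_c is the unique solution of the linear system ⟨p, v_r⟩ = 1/(2 cos α_r) for r ∈ {a, b, c}; moreover the determinant of the Gram matrix of (v_a, v_b, v_c) equals 4 t_a t_b t_c (t_a + t_b + t_c − t_a t_b t_c)/((1+t_a²)(1+t_b²)(1+t_c²)) where t_x = tan α_x, and in particular is positive. -/
open Real
open scoped RealInnerProductSpace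

private lemma gram_key (c0 c1 c2 s0 s1 s2 : ℝ)
    (h0 : s0 ^ 2 + c0 ^ 2 = 1) (h1 : s1 ^ 2 + c1 ^ 2 = 1) (h2 : s2 ^ 2 + c2 ^ 2 = 1) :
    1 - (c0 * c1 - s0 * s1) ^ 2 - (c1 * c2 - s1 * s2) ^ 2 - (c0 * c2 - s0 * s2) ^ 2 +
        2 * ((c0 * c1 - s0 * s1) * (c1 * c2 - s1 * s2) * (c0 * c2 - s0 * s2)) =
      4 * s0 * s1 * s2 * (s0 * c1 * c2 + c0 * s1 * c2 + c0 * c1 * s2 - s0 * s1 * s2) := by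
  linear_combination (-s2 ^ 2 - s1 ^ 2 + 2 * s1 ^ 2 * s2 ^ 2 - 2 * c1 * c2 * s1 * s2) * h0 +
    (-1 + s2 ^ 2 - 2 * c0 * c2 * s0 * s2 + c0 ^ 2 - 2 * c0 ^ 2 * s2 ^ 2) * h1 +
    (-c1 ^ 2 - 2 * c0 * c1 * s0 * s1 - c0 ^ 2 + 2 * c0 ^ 2 * c1 ^ 2) * h2

/-- Let `v a, v b, v c` be linearly independent unit vectors in `ℝ³` with
pairwise angles `α x + α y`, `α x ∈ (0, π/2)`.  The circumcenter of the
tetrahedron with vertices `o` and `v r / cos (α r)` is the unique solution `p`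
of the linear system `⟪p, v r⟫ = 1/(2 cos α r)`; every solution of this system
is equidistant from the four vertices; moreover the Gram determinant of
`(v a, v b, v c)` equals
`4 t_a t_b t_c (t_a + t_b + t_c − t_a t_b t_c)/((1+t_a²)(1+t_b²)(1+t_c²))`
with `t_x = tan α_x`, and in particular is positive. -/
theorem circumcenter_linear_system (v : Fin 3 → EuclideanSpace ℝ (Fin 3))
    (hv : ∀ i, ‖v i‖ = 1) (α : Fin 3 → ℝ)
    (hα : ∀ i, α i ∈ Set.Ioo 0 (π / 2))
    (hangle : ∀ i j, i ≠ j → Real.arccos ⟪v i, v j⟫ = α i + α j)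
    (hind : LinearIndependent ℝ v) :
    (∃! p : EuclideanSpace ℝ (Fin 3),
        ∀ r, ⟪p, v r⟫ = 1 / (2 * Real.cos (α r))) ∧
    (∀ p : EuclideanSpace ℝ (Fin 3),
        (∀ r, ⟪p, v r⟫ = 1 / (2 * Real.cos (α r))) →
        ∀ r, dist p ((Real.cos (α r))⁻¹ • v r) = ‖p‖) ∧
    (Matrix.of fun i j => (⟪v i, v j⟫ : ℝ)).det =
      4 * Real.tan (α 0) * Real.tan (α 1) * Real.tan (α 2) *
          (Real.tan (α 0) + Real.tan (α 1) + Real.tan (α 2) -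
            Real.tan (α 0) * Real.tan (α 1) * Real.tan (α 2)) /
        ((1 + Real.tan (α 0) ^ 2) * (1 + Real.tan (α 1) ^ 2) *
          (1 + Real.tan (α 2) ^ 2)) ∧
    0 < (Matrix.of fun i j => (⟪v i, v j⟫ : ℝ)).det := by
  have hcpos : ∀ i, 0 < Real.cos (α i) := fun i =>
    Real.cos_pos_of_mem_Ioo ⟨by linarith [(hα i).1, Real.pi_pos], (hα i).2⟩
  have hcne : ∀ i, Real.cos (α i) ≠ 0 := fun i => (hcpos i).ne'
  -- inner products
  have hinner : ∀ i j, i ≠ j → (⟪v i, v j⟫ : ℝ) = Real.cos (α i + α j) := by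
    intro i j hij
    have hle : |(⟪v i, v j⟫ : ℝ)| ≤ 1 := by
      have := abs_real_inner_le_norm (v i) (v j)
      rwa [hv i, hv j, one_mul] at this
    rw [← hangle i j hij, Real.cos_arccos (neg_le_of_abs_le hle) (le_of_abs_le hle)]
  have hself : ∀ i, (⟪v i, v i⟫ : ℝ) = 1 := by
    intro i
    rw [real_inner_self_eq_norm_sq, hv i, one_pow]
  -- the matrix of coordinates
  set A : Matrix (Fin 3) (Fin 3) ℝ := Matrix.of fun i j => v i j with hA
  have hindA : LinearIndependent ℝ (fun i => A i) := by
    have := hind.map' (WithLp.linearEquiv 2 ℝ (Fin 3 → ℝ)).toLinearMap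
      (WithLp.linearEquiv 2 ℝ (Fin 3 → ℝ)).ker
    exact this
  have hAu : IsUnit A := Matrix.linearIndependent_rows_iff_isUnit.mp hindA
  have hip : ∀ (p : EuclideanSpace ℝ (Fin 3)) (r : Fin 3),
      (⟪p, v r⟫ : ℝ) = A.mulVec (fun j => p j) r := by
    intro p r
    simp [Matrix.mulVec, dotProduct, PiLp.inner_apply, RCLike.inner_apply, hA,
      mul_comm]
  constructor
  · -- existence and uniqueness
    haveI : Invertible A := hAu.invertible
    set b : Fin 3 → ℝ := fun r => 1 / (2 * Real.cos (α r)) with hb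
    have hsol : ∀ r, (⟪((WithLp.equiv 2 (Fin 3 → ℝ)).symm (A⁻¹.mulVec b)), v r⟫ : ℝ) = b r := by
      intro r
      rw [hip]
      show A.mulVec (A⁻¹.mulVec b) r = b r
      rw [Matrix.mulVec_mulVec, Matrix.mul_nonsing_inv A ((Matrix.isUnit_iff_isUnit_det A).mp hAu),
        Matrix.one_mulVec]
    refine ⟨((WithLp.equiv 2 (Fin 3 → ℝ)).symm (A⁻¹.mulVec b)), fun r => hsol r, ?_⟩
    · intro q hq
      have h1 : A.mulVec (fun j => q j) =
          A.mulVec (fun j => ((WithLp.equiv 2 (Fin 3 → ℝ)).symm (A⁻¹.mulVec b)) j) := by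
        funext r
        rw [← hip q r, ← hip ((WithLp.equiv 2 (Fin 3 → ℝ)).symm (A⁻¹.mulVec b)) r, hq r, hsol r]
      have hinj := Matrix.mulVec_injective_iff_isUnit.mpr hAu
      have := hinj h1
      ext j
      exact congrFun this j
  refine ⟨?_, ?_⟩
  · -- equidistance
    intro p hp r
    have hw : ‖(Real.cos (α r))⁻¹ • v r‖ = (Real.cos (α r))⁻¹ := by
      rw [norm_smul, hv r, mul_one, Real.norm_eq_abs, abs_of_pos (inv_pos.mpr (hcpos r))]
    have hpw : (⟪p, (Real.cos (α r))⁻¹ • v r⟫ : ℝ) = (Real.cos (α r))⁻¹ * (1 / (2 * Real.cos (α r))) := by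
      rw [real_inner_smul_right, hp r]
    have hsq : ‖p - (Real.cos (α r))⁻¹ • v r‖ ^ 2 = ‖p‖ ^ 2 := by
      rw [norm_sub_sq_real, hpw, hw]
      field_simp
      ring
    rw [dist_eq_norm]
    nlinarith [norm_nonneg (p - (Real.cos (α r))⁻¹ • v r), norm_nonneg p]
  · -- determinant formula and positivity
    have hG : (Matrix.of fun i j => (⟪v i, v j⟫ : ℝ)).det =
        1 - (Real.cos (α 0) * Real.cos (α 1) - Real.sin (α 0) * Real.sin (α 1)) ^ 2 -
          (Real.cos (α 1) * Real.cos (α 2) - Real.sin (α 1) * Real.sin (α 2)) ^ 2 -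
          (Real.cos (α 0) * Real.cos (α 2) - Real.sin (α 0) * Real.sin (α 2)) ^ 2 +
          2 * ((Real.cos (α 0) * Real.cos (α 1) - Real.sin (α 0) * Real.sin (α 1)) *
            (Real.cos (α 1) * Real.cos (α 2) - Real.sin (α 1) * Real.sin (α 2)) *
            (Real.cos (α 0) * Real.cos (α 2) - Real.sin (α 0) * Real.sin (α 2))) := by
      rw [Matrix.det_fin_three]
      simp only [Matrix.of_apply]
      rw [hself 0, hself 1, hself 2,
        hinner 0 1 (by decide), hinner 0 2 (by decide), hinner 1 0 (by decide),
        hinner 1 2 (by decide), hinner 2 0 (by decide), hinner 2 1 (by decide)]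
      simp only [Real.cos_add]
      ring
    have hform : (Matrix.of fun i j => (⟪v i, v j⟫ : ℝ)).det =
        4 * Real.tan (α 0) * Real.tan (α 1) * Real.tan (α 2) *
            (Real.tan (α 0) + Real.tan (α 1) + Real.tan (α 2) -
              Real.tan (α 0) * Real.tan (α 1) * Real.tan (α 2)) /
          ((1 + Real.tan (α 0) ^ 2) * (1 + Real.tan (α 1) ^ 2) *
            (1 + Real.tan (α 2) ^ 2)) := by
      rw [hG, gram_key _ _ _ _ _ _ (Real.sin_sq_add_cos_sq (α 0)) (Real.sin_sq_add_cos_sq (α 1))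
        (Real.sin_sq_add_cos_sq (α 2))]
      have d0 : 1 + Real.tan (α 0) ^ 2 = (Real.cos (α 0) ^ 2)⁻¹ := by
        rw [← Real.inv_one_add_tan_sq (hcne 0), inv_inv]
      have d1 : 1 + Real.tan (α 1) ^ 2 = (Real.cos (α 1) ^ 2)⁻¹ := by
        rw [← Real.inv_one_add_tan_sq (hcne 1), inv_inv]
      have d2 : 1 + Real.tan (α 2) ^ 2 = (Real.cos (α 2) ^ 2)⁻¹ := by
        rw [← Real.inv_one_add_tan_sq (hcne 2), inv_inv]
      rw [d0, d1, d2, Real.tan_eq_sin_div_cos, Real.tan_eq_sin_div_cos,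
        Real.tan_eq_sin_div_cos]
      field_simp [hcne 0, hcne 1, hcne 2]
    refine ⟨hform, ?_⟩
    have hGA : (Matrix.of fun i j => (⟪v i, v j⟫ : ℝ)) = A * A.transpose := by
      ext i j
      simp [Matrix.mul_apply, PiLp.inner_apply, RCLike.inner_apply, hA, Matrix.transpose_apply, mul_comm]
    rw [hGA, Matrix.det_mul, Matrix.det_transpose, ← sq]
    have : A.det ≠ 0 := by
      intro h
      exact ((Matrix.isUnit_iff_isUnit_det A).mp hAu).ne_zero (by rw [h])
    positivity
end
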